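/- arXiv:1001.0338 — 3 statements merged into one kernel-verified Lean document; each statement's English description precedes it below -/
import Mathlib

section
/- (Heller–Tompkins sufficient condition) Let A be a matrix with entries in {-1, 0, 1} such that every column of A has at most two nonzero entries, and whenever a column has exactly two nonzero entries, they have opposite signs. Then A is totally unimodular. -/
/-- A matrix is totally unimodular if every square submatrix has determinant 0, 1 or -1. -/
def IsTotUnimod {R : Type*} [CommRing R] {m n : Type*} (A : Matrix m n R) : Prop :=
  ∀ (k : ℕ) (f : Fin k → m) (g : Fin k → n), Function.Injective f → Function.Injective g →
    (A.submatrix f g).det ∈ ({-1, 0, 1} : Set R)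

lemma key : ∀ (k : ℕ) (B : Matrix (Fin k) (Fin k) ℤ),
    (∀ i j, B i j ∈ ({-1, 0, 1} : Set ℤ)) →
    (∀ j, (Finset.univ.filter (fun i => B i j ≠ 0)).card ≤ 2) →
    (∀ j i i', i ≠ i' → B i j ≠ 0 → B i' j ≠ 0 → B i j = -B i' j) →
    B.det ∈ ({-1, 0, 1} : Set ℤ) := by
  intro k
  induction k with
  | zero => intro B _ _ _; simp [Matrix.det_fin_zero]
  | succ n ih =>
    intro B hent hcol hsig
    by_cases hz : ∃ j, ∀ i, B i j = 0
    · obtain ⟨j, hj⟩ := hz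
      right; left
      exact Matrix.det_eq_zero_of_column_eq_zero j hj
    by_cases h1 : ∃ j i, B i j ≠ 0 ∧ ∀ i', i' ≠ i → B i' j = 0
    · obtain ⟨j, i, hij, hrest⟩ := h1
      have hdet : B.det = (-1) ^ (i + j : ℕ) * B i j *
          (B.submatrix i.succAbove j.succAbove).det := by
        rw [Matrix.det_succ_column B j]
        rw [Finset.sum_eq_single i]
        · intro b _ hb
          rw [hrest b hb]; ring
        · intro h; exact absurd (Finset.mem_univ i) h
      have hminor : (B.submatrix i.succAbove j.succAbove).det ∈ ({-1, 0, 1} : Set ℤ) := by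
        apply ih
        · intro a b; exact hent _ _
        · intro b
          calc (Finset.univ.filter (fun a => B.submatrix i.succAbove j.succAbove a b ≠ 0)).card
              ≤ (Finset.univ.filter (fun a => B a (j.succAbove b) ≠ 0)).card := by
                apply Finset.card_le_card_of_injOn (fun a => i.succAbove a)
                · intro a ha
                  simp only [Finset.mem_coe, Finset.mem_filter, Finset.mem_univ, true_and] at ha ⊢
                  exact ha
                · intro a _ a' _ h
                  exact Fin.succAbove_right_injective h
            _ ≤ 2 := hcol _
        · intro b a a' hne ha ha'
          exact hsig _ _ _ (fun h => hne (Fin.succAbove_right_injective h)) ha ha'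
      have hBij : B i j = -1 ∨ B i j = 1 := by
        rcases hent i j with h | h | h
        · left; exact h
        · exact absurd h hij
        · right; exact h
      rw [hdet]
      rcases neg_one_pow_eq_or ℤ (i + j : ℕ) with hp | hp <;>
        rcases hBij with h | h <;>
        rcases hminor with hm | hm | hm <;>
        rw [hp, h, hm] <;>
        norm_num [Set.mem_insert_iff, Set.mem_singleton_iff]
    · -- every column has exactly two nonzeros, of opposite signs; rows sum to 0
      push_neg at hz h1
      right; left
      have hsum : ∀ j, ∑ i, B i j = 0 := by
        intro j
        have hcard : (Finset.univ.filter (fun i => B i j ≠ 0)).card = 2 := by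
          refine le_antisymm (hcol j) ?_
          obtain ⟨i, hi⟩ := hz j
          obtain ⟨i', hi'1, hi'2⟩ := h1 j i hi
          refine Finset.one_lt_card.mpr ⟨i, ?_, i', ?_, fun h => hi'1 h.symm⟩ <;>
            simp [hi, hi'2]
        obtain ⟨a, b, hab, hset⟩ := Finset.card_eq_two.mp hcard
        have ha : B a j ≠ 0 := by
          have : a ∈ Finset.univ.filter (fun i => B i j ≠ 0) := by simp [hset]
          simpa using this
        have hb : B b j ≠ 0 := by
          have : b ∈ Finset.univ.filter (fun i => B i j ≠ 0) := by simp [hset]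
          simpa using this
        have hz' : ∀ i, i ≠ a → i ≠ b → B i j = 0 := by
          intro i hia hib
          by_contra h
          have : i ∈ Finset.univ.filter (fun i => B i j ≠ 0) := by simp [h]
          rw [hset] at this
          simp at this
          tauto
        have := hsig j a b hab ha hb
        calc ∑ i, B i j = ∑ i ∈ ({a, b} : Finset (Fin (n+1))), B i j := by
              refine (Finset.sum_subset (Finset.subset_univ _) ?_).symm
              intro i _ hi
              simp at hi
              exact hz' i hi.1 hi.2
          _ = B a j + B b j := Finset.sum_pair hab
          _ = 0 := by rw [this]; ring
      have h0 : B.det = (B.updateRow 0 (∑ k, (fun _ => (1:ℤ)) k • B k)).det := by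
        rw [Matrix.det_updateRow_sum B 0 (fun _ => (1:ℤ))]
        simp
      rw [h0]
      apply Matrix.det_eq_zero_of_row_eq_zero 0
      intro j
      simp only [Matrix.updateRow_self, one_smul]
      change (∑ k : Fin (n+1), (fun y => B k y)) j = 0
      rw [Finset.sum_apply]
      exact hsum j

/-- Heller–Tompkins (one-class case): a {-1,0,1} matrix in which every column has at most two
nonzero entries, of opposite signs when there are two, is totally unimodular. -/
theorem hellerTompkins_oneClass {m n : Type*} [Fintype m] [DecidableEq m]
    (A : Matrix m n ℤ)
    (hentries : ∀ i j, A i j ∈ ({-1, 0, 1} : Set ℤ))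
    (hcol : ∀ j, (Finset.univ.filter (fun i => A i j ≠ 0)).card ≤ 2)
    (hsigns : ∀ j, ∀ i i' : m, i ≠ i' → A i j ≠ 0 → A i' j ≠ 0 → A i j = -A i' j) :
    IsTotUnimod A := by
  intro k f g hf hg
  apply key
  · intro i j; exact hentries _ _
  · intro j
    calc (Finset.univ.filter (fun i => (A.submatrix f g) i j ≠ 0)).card
        ≤ (Finset.univ.filter (fun i => A i (g j) ≠ 0)).card := by
          apply Finset.card_le_card_of_injOn f
          · intro a ha
            simp only [Finset.mem_coe, Finset.mem_filter, Finset.mem_univ, true_and] at ha ⊢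
            exact ha
          · intro a _ a' _ h; exact hf h
      _ ≤ 2 := hcol _
  · intro j i i' hne hi hi'
    exact hsigns _ _ _ (fun h => hne (hf h)) hi hi'
end

section
/- Let A be an m×n totally unimodular real matrix and b an integral vector in ℤ^m. Then every vertex (extreme point) of the polyhedron P = {x ∈ ℝⁿ : Ax = b, x ≥ 0} is integral. -/
/-- Every vertex of {x : Ax = b, x ≥ 0} is integral when A is totally unimodular and b
is integral. -/
theorem vertex_integral {m n : ℕ} (A : Matrix (Fin m) (Fin n) ℝ)
    (hA : IsTotUnimod A) (b : Fin m → ℝ) (hb : ∀ i, ∃ z : ℤ, b i = z)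
    (x : Fin n → ℝ)
    (hx : x ∈ Set.extremePoints ℝ {x : Fin n → ℝ | A.mulVec x = b ∧ ∀ i, 0 ≤ x i}) :
    ∀ i, ∃ z : ℤ, x i = z := by
  classical
  obtain ⟨⟨hxb, hxpos⟩, hxext⟩ := hx
  -- the support of x
  set S : Finset (Fin n) := Finset.univ.filter (fun i => x i ≠ 0) with hS
  set k : ℕ := S.card with hk
  set e : Fin k ≃o {i // i ∈ S} := S.orderIsoOfFin rfl with he
  set s : Fin k → Fin n := fun j => (e j : Fin n) with hsdef
  have hsmem : ∀ j, s j ∈ S := fun j => (e j).2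
  have hsinj : Function.Injective s := fun a b hab => by
    have : e a = e b := Subtype.ext hab
    simpa using e.injective this
  have hxS : ∀ i, i ∉ S → x i = 0 := by
    intro i hi
    by_contra h
    exact hi (Finset.mem_filter.2 ⟨Finset.mem_univ i, h⟩)
  have hxSpos : ∀ i, i ∈ S → 0 < x i := by
    intro i hi
    have := (Finset.mem_filter.1 hi).2
    exact lt_of_le_of_ne (hxpos i) (Ne.symm this)
  -- Step A: any direction in the kernel supported on S is zero
  have keyA : ∀ d : Fin n → ℝ, A.mulVec d = 0 → (∀ i, i ∉ S → d i = 0) → d = 0 := by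
    intro d hd hdS
    by_contra hd0
    obtain ⟨i0, hi0⟩ : ∃ i, d i ≠ 0 := by
      by_contra h
      push_neg at h
      exact hd0 (funext h)
    set g : Fin n → ℝ := fun i => if d i = 0 then 1 else x i / |d i| with hg
    set ε : ℝ := Finset.univ.inf' (show (Finset.univ : Finset (Fin n)).Nonempty from ⟨i0, Finset.mem_univ i0⟩) g with hε
    have hεpos : 0 < ε := by
      rw [hε, Finset.lt_inf'_iff]
      intro i _
      by_cases hdi : d i = 0
      · simp [hg, hdi]
      · have hiS : i ∈ S := by
          by_contra h
          exact hdi (hdS i h)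
        have := hxSpos i hiS
        simp only [hg, if_neg hdi]
        exact div_pos this (abs_pos.2 hdi)
    have hbound : ∀ i, ε * |d i| ≤ x i := by
      intro i
      by_cases hdi : d i = 0
      · simp [hdi, hxpos i]
      · have h1 : ε ≤ g i := Finset.inf'_le _ (Finset.mem_univ i)
        rw [hg] at h1
        simp only [if_neg hdi] at h1
        exact (le_div_iff₀ (abs_pos.2 hdi)).1 h1
    set x1 : Fin n → ℝ := x + ε • d with hx1
    set x2 : Fin n → ℝ := x - ε • d with hx2
    have hmem1 : x1 ∈ {x : Fin n → ℝ | A.mulVec x = b ∧ ∀ i, 0 ≤ x i} := by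
      constructor
      · rw [hx1, Matrix.mulVec_add, Matrix.mulVec_smul, hd, hxb]
        simp
      · intro i
        have h1 : -(ε * |d i|) ≤ ε * d i := by
          rw [← mul_neg]
          exact mul_le_mul_of_nonneg_left (neg_abs_le _) hεpos.le
        have := hbound i
        simp only [hx1, Pi.add_apply, Pi.smul_apply, smul_eq_mul]
        linarith
    have hmem2 : x2 ∈ {x : Fin n → ℝ | A.mulVec x = b ∧ ∀ i, 0 ≤ x i} := by
      constructor
      · rw [hx2, Matrix.mulVec_sub, Matrix.mulVec_smul, hd, hxb]
        simp
      · intro i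
        have h1 : ε * d i ≤ ε * |d i| :=
          mul_le_mul_of_nonneg_left (le_abs_self _) hεpos.le
        have := hbound i
        simp only [hx2, Pi.sub_apply, Pi.smul_apply, smul_eq_mul]
        linarith
    have hseg : x ∈ openSegment ℝ x1 x2 := by
      refine ⟨1/2, 1/2, by norm_num, by norm_num, by norm_num, ?_⟩
      funext i
      simp only [hx1, hx2, Pi.add_apply, Pi.sub_apply, Pi.smul_apply, smul_eq_mul]
      ring
    have := (hxext hmem1 hmem2 hseg)
    have hεd : ε • d = 0 := by
      have : x + ε • d = x := this
      calc ε • d = (x + ε • d) - x := by abel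
      _ = 0 := by rw [this]; abel
    exact hi0 (by
      have := congrFun hεd i0
      simp only [Pi.smul_apply, smul_eq_mul, Pi.zero_apply] at this
      rcases mul_eq_zero.1 this with h | h
      · exact absurd h hεpos.ne'
      · exact h)
  -- Step B: columns of A indexed by S are linearly independent
  set M : Matrix (Fin m) (Fin k) ℝ := A.submatrix id s with hM
  have hsum : ∀ (f : Fin n → ℝ) (r : Fin m), (∀ i, i ∉ S → f i = 0) →
      ∑ i, A r i * f i = ∑ j, A r (s j) * f (s j) := by
    intro f r hf
    rw [← Finset.sum_subset (Finset.subset_univ S) (fun i _ hi => by rw [hf i hi, mul_zero])]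
    rw [← Finset.sum_attach S (fun i => A r i * f i)]
    exact (Equiv.sum_comp e.toEquiv (fun a => A r a * f a)).symm
  have hcols : LinearIndependent ℝ (fun j : Fin k => (M.transpose j : Fin m → ℝ)) := by
    rw [Fintype.linearIndependent_iff]
    intro g hg j
    set d : Fin n → ℝ := fun i => if h : i ∈ S then g (e.symm ⟨i, h⟩) else 0 with hd
    have hds : ∀ j, d (s j) = g j := by
      intro j
      have hmem := hsmem j
      simp only [hd, dif_pos hmem]
      congr 1
      have : (⟨s j, hmem⟩ : {i // i ∈ S}) = e j := Subtype.ext rfl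
      rw [this, OrderIso.symm_apply_apply]
    have hdS : ∀ i, i ∉ S → d i = 0 := fun i hi => by simp [hd, dif_neg hi]
    have hAd : A.mulVec d = 0 := by
      funext r
      have h1 := hsum d r hdS
      have h2 := congrFun hg r
      simp only [Finset.sum_apply, Pi.smul_apply, smul_eq_mul, Pi.zero_apply] at h2
      simp only [Matrix.mulVec, dotProduct, Pi.zero_apply]
      rw [h1]
      rw [← h2]
      apply Finset.sum_congr rfl
      intro j _
      rw [hds j]
      simp only [Matrix.transpose_apply, hM, Matrix.submatrix_apply, id]
      ring
    have := keyA d hAd hdS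
    rw [← hds j, this]
    rfl
  -- Step C: find k rows making an invertible square submatrix
  have hrank : Module.finrank ℝ (Submodule.span ℝ (Set.range M)) = k := by
    have h1 : M.transpose.rank = k := by
      rw [LinearIndependent.rank_matrix (M := M.transpose) hcols, Fintype.card_fin]
    change Module.finrank ℝ (Submodule.span ℝ (Set.range M.row)) = k
    rw [← Matrix.rank_eq_finrank_span_row, ← Matrix.rank_transpose, h1]
  obtain ⟨bset, hbsub, hbspan, hbli⟩ := exists_linearIndependent ℝ (Set.range M)
  have hbfin : bset.Finite := (Set.finite_range M).subset hbsub
  haveI : Fintype bset := hbfin.fintype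
  have hbcard : Fintype.card bset = k := by
    have h1 := finrank_span_set_eq_card hbli
    rw [hbspan, hrank, Set.toFinset_card] at h1
    exact h1.symm
  set φ : Fin k ≃ bset := (Fintype.equivFinOfCardEq hbcard).symm with hφ
  have hchoice : ∀ j : Fin k, ∃ r : Fin m, M r = (φ j).1 := fun j => hbsub (φ j).2
  set r : Fin k → Fin m := fun j => (hchoice j).choose with hr
  have hrM : ∀ j, M (r j) = (φ j).1 := fun j => (hchoice j).choose_spec
  have hrinj : Function.Injective r := by
    intro a c hac
    have : (φ a).1 = (φ c).1 := by rw [← hrM a, ← hrM c, hac]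
    exact φ.injective (Subtype.ext this)
  set N : Matrix (Fin k) (Fin k) ℝ := A.submatrix r s with hN
  have hNrows : LinearIndependent ℝ (fun j : Fin k => N j) := by
    have : (fun j : Fin k => N j) = (Subtype.val : bset → _) ∘ φ := by
      funext j
      have := hrM j
      simp only [hN, Function.comp_apply, ← this, hM]
      funext q
      simp [Matrix.submatrix_apply]
    rw [this]
    exact hbli.comp φ φ.injective
  have hNunit : IsUnit N := Matrix.linearIndependent_rows_iff_isUnit.1 hNrows
  have hNdet : N.det ≠ 0 := by
    have := hNunit.map Matrix.detMonoidHom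
    simpa using this.ne_zero
  have hNdet1 : N.det = 1 ∨ N.det = -1 := by
    rcases hA k r s hrinj hsinj with h | h | h
    · right; exact h
    · exact absurd h hNdet
    · left; exact h
  -- entries of A are integers
  have hAint : ∀ i j, ∃ z : ℤ, A i j = z := by
    intro i j
    rcases hA 1 (fun _ => i) (fun _ => j) (fun a c _ => Subsingleton.elim a c)
      (fun a c _ => Subsingleton.elim a c) with h | h | h <;>
      [exact ⟨-1, by simpa using h⟩; exact ⟨0, by simpa using h⟩; exact ⟨1, by simpa using h⟩]
  set Nz : Matrix (Fin k) (Fin k) ℤ := fun p q => (hAint (r p) (s q)).choose with hNz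
  have hNcast : N = (Int.castRingHom ℝ).mapMatrix Nz := by
    ext p q
    simp only [hN, Matrix.submatrix_apply, RingHom.mapMatrix_apply, Matrix.map_apply, hNz]
    exact (hAint (r p) (s q)).choose_spec
  set bz : Fin k → ℤ := fun p => (hb (r p)).choose with hbz
  have hbcast : ∀ p, b (r p) = (bz p : ℝ) := fun p => (hb (r p)).choose_spec
  -- N.mulVec xS = bR
  set xS : Fin k → ℝ := fun j => x (s j) with hxSdef
  have hNx : N.mulVec xS = fun p => b (r p) := by
    funext p
    have h1 := congrFun hxb (r p)
    have h2 := hsum x (r p) hxS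
    simp only [Matrix.mulVec, dotProduct] at h1 ⊢
    simp only [hN, hxSdef, Matrix.submatrix_apply]
    rw [← h2, h1]
  have hdetz : Nz.det = 1 ∨ Nz.det = -1 := by
    have hmap : N.det = ((Nz.det : ℤ) : ℝ) := by
      rw [hNcast, ← RingHom.map_det]
      rfl
    rcases hNdet1 with h | h
    · left; rw [hmap] at h; exact_mod_cast h
    · right; rw [hmap] at h; exact_mod_cast h
  -- solve for xS using adjugate
  have hsolve : ∀ q, xS q = N.det * ((N.adjugate.mulVec (fun p => b (r p))) q) := by
    intro q
    have h1 : N.adjugate.mulVec (N.mulVec xS) = N.det • xS := by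
      rw [Matrix.mulVec_mulVec, Matrix.adjugate_mul, Matrix.smul_mulVec,
        Matrix.one_mulVec]
    rw [← hNx, h1]
    have hdd : N.det * N.det = 1 := by
      rcases hNdet1 with h | h <;> rw [h] <;> norm_num
    simp only [Pi.smul_apply, smul_eq_mul]
    calc xS q = (N.det * N.det) * xS q := by rw [hdd, one_mul]
    _ = N.det * (N.det * xS q) := by ring
  have hint : ∀ q, ∃ z : ℤ, xS q = z := by
    intro q
    refine ⟨Nz.det * ((Nz.adjugate.mulVec bz) q), ?_⟩
    rw [hsolve q]
    have hadj : N.adjugate = (Int.castRingHom ℝ).mapMatrix Nz.adjugate := by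
      rw [hNcast, ← RingHom.map_adjugate]
    have hmv : (N.adjugate.mulVec (fun p => b (r p))) q = ((Nz.adjugate.mulVec bz) q : ℤ) := by
      simp only [Matrix.mulVec, dotProduct, hadj, RingHom.mapMatrix_apply, Matrix.map_apply]
      push_cast
      apply Finset.sum_congr rfl
      intro p _
      rw [hbcast p]
      simp
    have hmapdet : N.det = ((Nz.det : ℤ) : ℝ) := by
      rw [hNcast, ← RingHom.map_det]
      rfl
    rw [hmv, hmapdet]
    push_cast
    ring
  -- conclude
  intro i
  by_cases hi : i ∈ S
  · have : i = s (e.symm ⟨i, hi⟩) := by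
      simp only [hsdef, OrderIso.apply_symm_apply]
    rw [this]
    exact hint (e.symm ⟨i, hi⟩)
  · exact ⟨0, by rw [hxS i hi]; simp⟩
end

section
/- Let A be a real matrix with entries in {-1,0,1} such that each column has at most two nonzero entries, and suppose the rows of A can be partitioned into two sets R₁, R₂ such that for every column with two nonzero entries: if both nonzeros are in the same partition class they have opposite signs, and if they are in different classes they have the same sign. Then A is totally unimodular. -/
lemma memSet_mul {a b : ℝ} (ha : a ∈ ({-1, 0, 1} : Set ℝ)) (hb : b ∈ ({-1, 0, 1} : Set ℝ)) :
    a * b ∈ ({-1, 0, 1} : Set ℝ) := by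
  simp only [Set.mem_insert_iff, Set.mem_singleton_iff] at *
  rcases ha with h | h | h <;> rcases hb with h' | h' | h' <;> subst h <;> subst h' <;> norm_num

lemma memSet_negone_pow (nn : ℕ) : ((-1 : ℝ)) ^ nn ∈ ({-1, 0, 1} : Set ℝ) := by
  rcases Nat.even_or_odd nn with h | h
  · right; right; exact h.neg_one_pow
  · left; exact h.neg_one_pow

/-- Heller–Tompkins sufficient condition for total unimodularity. -/
theorem hellerTompkins {m n : Type*} [Fintype m] [DecidableEq m]
    (A : Matrix m n ℝ)
    (hentries : ∀ i j, A i j ∈ ({-1, 0, 1} : Set ℝ))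
    (hcol : ∀ j, (Finset.univ.filter (fun i => A i j ≠ 0)).card ≤ 2)
    (R₁ : Set m)
    (hsigns : ∀ j, ∀ i i' : m, i ≠ i' → A i j ≠ 0 → A i' j ≠ 0 →
      (((i ∈ R₁) ↔ (i' ∈ R₁)) → A i j = -A i' j) ∧
      (¬((i ∈ R₁) ↔ (i' ∈ R₁)) → A i j = A i' j)) :
    IsTotUnimod A := by
  classical
  intro k
  induction k using Nat.strong_induction_on with
  | _ k IH =>
    intro f g hf hg
    have hcolB : ∀ c : Fin k, (Finset.univ.filter (fun i : Fin k => A (f i) (g c) ≠ 0)).card ≤ 2 := by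
      intro c
      refine le_trans ?_ (hcol (g c))
      apply Finset.card_le_card_of_injOn f
      · intro i hi
        simp only [Finset.mem_coe, Finset.mem_filter, Finset.mem_univ, true_and] at hi ⊢
        exact hi
      · exact fun a _ b _ h => hf h
    cases k with
    | zero => simp [Matrix.det_fin_zero]
    | succ N =>
      by_cases hex : ∃ c, (Finset.univ.filter (fun i : Fin (N+1) => A (f i) (g c) ≠ 0)).card ≤ 1
      · obtain ⟨c, hc⟩ := hex
        interval_cases hcard : (Finset.univ.filter (fun i : Fin (N+1) => A (f i) (g c) ≠ 0)).card
        · -- zero column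
          right; left
          apply Matrix.det_eq_zero_of_column_eq_zero c
          intro i
          have : i ∉ Finset.univ.filter (fun i : Fin (N+1) => A (f i) (g c) ≠ 0) := by
            simp [Finset.card_eq_zero.mp hcard]
          simpa using this
        · -- one nonzero: expand
          obtain ⟨r, hr⟩ := Finset.card_eq_one.mp hcard
          have hrmem : A (f r) (g c) ≠ 0 := by
            have : r ∈ Finset.univ.filter (fun i : Fin (N+1) => A (f i) (g c) ≠ 0) := by
              simp [hr]
            simpa using this
          have hzero : ∀ i : Fin (N+1), i ≠ r → A (f i) (g c) = 0 := by
            intro i hi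
            by_contra h
            have : i ∈ Finset.univ.filter (fun i : Fin (N+1) => A (f i) (g c) ≠ 0) := by
              simp [h]
            rw [hr] at this
            exact hi (Finset.mem_singleton.mp this)
          rw [Matrix.det_succ_column (A.submatrix f g) c]
          rw [Finset.sum_eq_single r]
          · have hminor : ((A.submatrix f g).submatrix r.succAbove c.succAbove).det
                ∈ ({-1, 0, 1} : Set ℝ) := by
              rw [Matrix.submatrix_submatrix]
              exact IH N (Nat.lt_succ_self N) (f ∘ r.succAbove) (g ∘ c.succAbove)
                (hf.comp (Fin.succAbove_right_injective))
                (hg.comp (Fin.succAbove_right_injective))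
            have hBrc : A (f r) (g c) ∈ ({-1, 0, 1} : Set ℝ) := hentries _ _
            exact memSet_mul (memSet_mul (memSet_negone_pow _) hBrc) hminor
          · intro i _ hi
            simp [Matrix.submatrix_apply, hzero i hi]
          · simp
      · push_neg at hex
        -- every column has exactly two nonzeros
        have h2 : ∀ c, (Finset.univ.filter (fun i : Fin (N+1) => A (f i) (g c) ≠ 0)).card = 2 := by
          intro c
          exact le_antisymm (hcolB c) (hex c)
        right; left
        rw [← Matrix.exists_vecMul_eq_zero_iff]
        set ε : Fin (N+1) → ℝ := fun i => if f i ∈ R₁ then 1 else -1 with hε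
        refine ⟨ε, ?_, ?_⟩
        · intro h
          have := congrFun h 0
          simp only [hε, Pi.zero_apply] at this
          split_ifs at this <;> norm_num at this
        · funext c
          obtain ⟨i₀, i₁, hne, hpair⟩ := Finset.card_eq_two.mp (h2 c)
          have hz0 : A (f i₀) (g c) ≠ 0 := by
            have : i₀ ∈ Finset.univ.filter (fun i : Fin (N+1) => A (f i) (g c) ≠ 0) := by
              simp [hpair]
            simpa using this
          have hz1 : A (f i₁) (g c) ≠ 0 := by
            have : i₁ ∈ Finset.univ.filter (fun i : Fin (N+1) => A (f i) (g c) ≠ 0) := by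
              simp [hpair]
            simpa using this
          have hzero : ∀ i : Fin (N+1), i ≠ i₀ → i ≠ i₁ → A (f i) (g c) = 0 := by
            intro i h0 h1
            by_contra h
            have : i ∈ Finset.univ.filter (fun i : Fin (N+1) => A (f i) (g c) ≠ 0) := by
              simp [h]
            rw [hpair] at this
            rcases Finset.mem_insert.mp this with h' | h'
            · exact h0 h'
            · exact h1 (Finset.mem_singleton.mp h')
          have hsum : ∑ i, ε i * A (f i) (g c) = ε i₀ * A (f i₀) (g c) + ε i₁ * A (f i₁) (g c) := by
            rw [← Finset.sum_subset (Finset.subset_univ ({i₀, i₁} : Finset (Fin (N+1))))]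
            · rw [Finset.sum_pair hne]
            · intro i _ hi
              simp only [Finset.mem_insert, Finset.mem_singleton, not_or] at hi
              rw [hzero i hi.1 hi.2, mul_zero]
          have key := hsigns (g c) (f i₀) (f i₁) (fun h => hne (hf h)) hz0 hz1
          have : ε i₀ * A (f i₀) (g c) + ε i₁ * A (f i₁) (g c) = 0 := by
            by_cases hiff : (f i₀ ∈ R₁) ↔ (f i₁ ∈ R₁)
            · have ha := key.1 hiff
              have hεeq : ε i₀ = ε i₁ := by
                simp only [hε]
                by_cases h0 : f i₀ ∈ R₁
                · rw [if_pos h0, if_pos (hiff.mp h0)]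
                · rw [if_neg h0, if_neg (fun h => h0 (hiff.mpr h))]
              rw [ha, hεeq]; ring
            · have ha := key.2 hiff
              have hεeq : ε i₀ = -ε i₁ := by
                simp only [hε]
                by_cases h0 : f i₀ ∈ R₁
                · rw [if_pos h0, if_neg (fun h => hiff (iff_of_true h0 h))]; norm_num
                · rw [if_neg h0]
                  have h1 : f i₁ ∈ R₁ := by
                    by_contra h1
                    exact hiff (iff_of_false h0 h1)
                  rw [if_pos h1]
              rw [ha, hεeq]; ring
          show (Matrix.vecMul ε (A.submatrix f g)) c = 0
          rw [Matrix.vecMul, dotProduct]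
          simpa [Matrix.submatrix_apply] using hsum.trans this
end
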